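/- arXiv:1808.00787 — 3 statements merged into one kernel-verified Lean document; each statement's English description precedes it below -/
import Mathlib

section
/- Monotonicity of failure probability in capacity: for the decoupled single-station model with fixed initial vehicle count v and fixed rates, the failure probability q^F(T; v, c) is nonincreasing in the capacity c, i.e., c ≤ c' implies q^F(T; v, c') ≤ q^F(T; v, c), for all c ≥ v. -/
/-- `q`, `qF` solve the Kolmogorov forward equations of the decoupled
single-station birth–death model with killing, on states `{0,…,c}`, with
arrival rate `lamA`, departure rate `lamD`, and `v` vehicles initially. -/
structure DecoupledSol (lamA lamD : ℝ → ℝ) (v c : ℕ)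
    (q : ℤ → ℝ → ℝ) (qF : ℝ → ℝ) : Prop where
  out : ∀ j : ℤ, (j < 0 ∨ (c : ℤ) < j) → ∀ t : ℝ, q j t = 0
  init : ∀ j : ℤ, 0 ≤ j → j ≤ (c : ℤ) → q j 0 = if j = (v : ℤ) then 1 else 0
  initF : qF 0 = 0
  ode : ∀ j : ℤ, 0 ≤ j → j ≤ (c : ℤ) → ∀ t : ℝ, 0 ≤ t →
    HasDerivAt (q j)
      (lamA t * q (j - 1) t - (lamA t + lamD t) * q j t + lamD t * q (j + 1) t) t
  odeF : ∀ t : ℝ, 0 ≤ t →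
    HasDerivAt qF (lamA t * q (c : ℤ) t + lamD t * q 0 t) t

/-!
By conservation of mass, `qF = 1 - ∑_{j ≤ c} q_j`, so it suffices to show that the surviving
mass grows with the capacity. This follows from the coordinatewise comparison `q_j ≤ q'_j`, the
analytic form of the coupling: `q' - q` is a supersolution of the forward equation on
`{0, …, c'}`, because beyond `c` the forward operator of `q` only sees the nonnegative inflow
`lamA q_c` into state `c + 1`. Supersolutions with nonnegative initial data stay nonnegative:
the sum `f` of the negative parts of the coordinates vanishes at time `0` and satisfies
`D⁺f ≤ (lamA + lamD) f`, so Grönwall's inequality forces `f = 0`.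
-/

open Finset Filter Set Topology

lemma sum_range_comp_add_one (G : ℤ → ℝ) (n : ℕ) :
    ∑ i ∈ range (n + 1), G (i + 1) = ∑ i ∈ range (n + 1), G i + G (n + 1) - G 0 := by
  have h := sum_range_sub (fun i : ℕ => G i) (n + 1)
  push_cast at h
  rw [sum_sub_distrib] at h
  linarith

lemma sum_range_comp_sub_one (G : ℤ → ℝ) (n : ℕ) :
    ∑ i ∈ range (n + 1), G (i - 1) = ∑ i ∈ range (n + 1), G i + G (-1) - G n := by
  have h := sum_range_sub (fun i : ℕ => G (i - 1)) (n + 1)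
  push_cast at h
  simp only [add_sub_cancel_right] at h
  rw [sum_sub_distrib] at h
  linarith

def forwardOp (lamA lamD : ℝ → ℝ) (u : ℤ → ℝ → ℝ) (j : ℤ) (t : ℝ) : ℝ :=
  lamA t * u (j - 1) t - (lamA t + lamD t) * u j t + lamD t * u (j + 1) t

lemma forwardOp_sub (lamA lamD : ℝ → ℝ) (u w : ℤ → ℝ → ℝ) (j : ℤ) (t : ℝ) :
    forwardOp lamA lamD (u - w) j t = forwardOp lamA lamD u j t - forwardOp lamA lamD w j t := by
  simp only [forwardOp, Pi.sub_apply]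
  ring

lemma sum_range_forwardOp (lamA lamD : ℝ → ℝ) {u : ℤ → ℝ → ℝ} {n : ℕ} {t : ℝ}
    (hbot : u (-1) t = 0) (htop : u (n + 1) t = 0) :
    ∑ i ∈ range (n + 1), forwardOp lamA lamD u i t = -(lamA t * u n t + lamD t * u 0 t) := by
  simp only [forwardOp, sum_add_distrib, sum_sub_distrib, ← mul_sum,
    sum_range_comp_sub_one (u · t), sum_range_comp_add_one (u · t), hbot, htop]
  ring

lemma eventually_max_sub_le_of_hasDerivAt {u : ℝ → ℝ} {d b t ε : ℝ} (hu : HasDerivAt u d t)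
    (hb : 0 ≤ b) (hd : 0 ≤ u t → d ≤ b) (hε : 0 < ε) :
    ∀ᶠ z in 𝓝[>] t, max (u z) 0 - max (u t) 0 ≤ (z - t) * (b + ε) := by
  rcases lt_or_ge (u t) 0 with hneg | hnonneg
  · have hzneg : ∀ᶠ z in 𝓝 t, u z < 0 := hu.continuousAt.eventually_lt_const hneg
    filter_upwards [eventually_nhdsWithin_of_eventually_nhds hzneg, self_mem_nhdsWithin]
      with z hz hzt
    rw [max_eq_right hz.le, max_eq_right hneg.le, sub_self]
    exact mul_nonneg (sub_pos.2 hzt).le (by linarith)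
  · have hlo := (hasDerivAt_iff_isLittleO.mp hu).def hε
    filter_upwards [eventually_nhdsWithin_of_eventually_nhds hlo, self_mem_nhdsWithin]
      with z hz hzt
    have hzt : 0 < z - t := sub_pos.2 hzt
    have hdiff : u z - u t - (z - t) * d ≤ ε * (z - t) := by
      simpa [Real.norm_eq_abs, abs_of_pos hzt] using (le_abs_self _).trans hz
    have hdb : (z - t) * d ≤ (z - t) * b := mul_le_mul_of_nonneg_left (hd hnonneg) hzt.le
    rw [max_eq_left hnonneg]
    refine sub_le_iff_le_add.2 (max_le ?_ ?_) <;> nlinarith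

lemma frequently_slope_sum_lt {ι : Type*} (s : Finset ι) {g : ι → ℝ → ℝ} {B : ι → ℝ}
    {t r : ℝ} (hg : ∀ ε > 0, ∀ i ∈ s, ∀ᶠ z in 𝓝[>] t, g i z - g i t ≤ (z - t) * (B i + ε))
    (hr : ∑ i ∈ s, B i < r) :
    ∃ᶠ z in 𝓝[>] t, (z - t)⁻¹ * (∑ i ∈ s, g i z - ∑ i ∈ s, g i t) < r := by
  set ε := (r - ∑ i ∈ s, B i) / (#s + 1)
  have hε : 0 < ε := div_pos (by linarith) (by positivity)
  have hcard : #s * ε < r - ∑ i ∈ s, B i := by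
    rw [mul_div_assoc', div_lt_iff₀ (by positivity)]
    nlinarith
  have hall := (eventually_all_finset s).2 (hg ε hε)
  refine (hall.and self_mem_nhdsWithin).frequently.mono fun z ⟨hz, hzt⟩ => ?_
  have hzt : 0 < z - t := sub_pos.2 hzt
  rw [inv_mul_lt_iff₀ hzt, ← sum_sub_distrib]
  calc ∑ i ∈ s, (g i z - g i t) ≤ ∑ i ∈ s, (z - t) * (B i + ε) := sum_le_sum hz
    _ = (z - t) * (∑ i ∈ s, B i + #s * ε) := by
      rw [← mul_sum, sum_add_distrib, sum_const, nsmul_eq_mul]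
    _ < (z - t) * r := by gcongr; linarith

def IsForwardSupersolution (lamA lamD : ℝ → ℝ) (n : ℕ) (u : ℤ → ℝ → ℝ) : Prop :=
  ∀ j : ℤ, 0 ≤ j → j ≤ n → ∀ t : ℝ, 0 ≤ t →
    ∃ d, HasDerivAt (u j) d t ∧ forwardOp lamA lamD u j t ≤ d

def IsForwardSubsolution (lamA lamD : ℝ → ℝ) (n : ℕ) (u : ℤ → ℝ → ℝ) : Prop :=
  ∀ j : ℤ, 0 ≤ j → j ≤ n → ∀ t : ℝ, 0 ≤ t →
    ∃ d, HasDerivAt (u j) d t ∧ d ≤ forwardOp lamA lamD u j t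

namespace IsForwardSupersolution

variable {lamA lamD : ℝ → ℝ} {n : ℕ} {u : ℤ → ℝ → ℝ}

lemma sub {w : ℤ → ℝ → ℝ} (hu : IsForwardSupersolution lamA lamD n u)
    (hw : IsForwardSubsolution lamA lamD n w) : IsForwardSupersolution lamA lamD n (u - w) := by
  intro j hj0 hjn t ht
  obtain ⟨d, hd, hud⟩ := hu j hj0 hjn t ht
  obtain ⟨e, he, hwe⟩ := hw j hj0 hjn t ht
  exact ⟨d - e, hd.sub he, by rw [forwardOp_sub]; linarith⟩

/-- Where `u j t ≤ 0` the diagonal term of the forward operator is nonnegative, so only the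
negative parts of the neighbours can push `u j` further down. -/
lemma eventually_negPart_sub_le (hu : IsForwardSupersolution lamA lamD n u)
    (hA0 : ∀ t, 0 ≤ lamA t) (hD0 : ∀ t, 0 ≤ lamD t) {j : ℤ} (hj0 : 0 ≤ j)
    (hjn : j ≤ n) {t : ℝ} (ht : 0 ≤ t) {ε : ℝ} (hε : 0 < ε) :
    ∀ᶠ z in 𝓝[>] t, max (-u j z) 0 - max (-u j t) 0 ≤
      (z - t) * (lamA t * max (-u (j - 1) t) 0 + lamD t * max (-u (j + 1) t) 0 + ε) := by
  obtain ⟨d, hd, hud⟩ := hu j hj0 hjn t ht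
  have hb := add_nonneg (mul_nonneg (hA0 t) (le_max_right (-u (j - 1) t) 0))
    (mul_nonneg (hD0 t) (le_max_right (-u (j + 1) t) 0))
  refine eventually_max_sub_le_of_hasDerivAt hd.neg hb (fun hneg => ?_) hε
  have hprev := mul_le_mul_of_nonneg_left (le_max_left (-u (j - 1) t) 0) (hA0 t)
  have hnext := mul_le_mul_of_nonneg_left (le_max_left (-u (j + 1) t) 0) (hD0 t)
  have hdiag := mul_nonneg (add_nonneg (hA0 t) (hD0 t)) hneg
  unfold forwardOp at hud
  linarith

lemma nonneg_of_rate_le (hu : IsForwardSupersolution lamA lamD n u)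
    (hA0 : ∀ t, 0 ≤ lamA t) (hD0 : ∀ t, 0 ≤ lamD t)
    (hout : ∀ j : ℤ, (j < 0 ∨ (n : ℤ) < j) → ∀ t, u j t = 0) (hinit : ∀ j, 0 ≤ u j 0)
    {K T : ℝ} (hT : 0 ≤ T) (hK : ∀ t ∈ Ico 0 T, lamA t + lamD t ≤ K) (j : ℤ) :
    0 ≤ u j T := by
  rcases lt_or_ge j 0 with hj0 | hj0
  · rw [hout j (Or.inl hj0)]
  rcases lt_or_ge (n : ℤ) j with hjn | hjn
  · rw [hout j (Or.inr hjn)]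
  have hmem : ∀ i ∈ range (n + 1), 0 ≤ (i : ℤ) ∧ (i : ℤ) ≤ n := fun i hi =>
    ⟨Int.natCast_nonneg i, by have := mem_range.1 hi; omega⟩
  set f : ℝ → ℝ := fun t => ∑ i ∈ range (n + 1), max (-u i t) 0
  have hf_nonneg : ∀ t, 0 ≤ f t := fun t => sum_nonneg fun i _ => le_max_right _ _
  have hf_cont : ContinuousOn f (Icc 0 T) := fun t ht =>
    ContinuousAt.continuousWithinAt <| tendsto_finsetSum _ fun (i : ℕ) hi => by
      obtain ⟨d, hd, -⟩ := hu i (hmem i hi).1 (hmem i hi).2 t ht.1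
      exact hd.continuousAt.neg.max continuousAt_const
  have hf_slope : ∀ t ∈ Ico 0 T, ∀ r, K * f t < r →
      ∃ᶠ z in 𝓝[>] t, (z - t)⁻¹ * (f z - f t) < r := by
    intro t ht r hr
    refine frequently_slope_sum_lt (range (n + 1))
      (fun ε hε i hi => hu.eventually_negPart_sub_le hA0 hD0 (hmem i hi).1 (hmem i hi).2 ht.1 hε)
      (lt_of_le_of_lt ?_ hr)
    have hprev := sum_range_comp_sub_one (fun i => max (-u i t) 0) n
    have hnext := sum_range_comp_add_one (fun i => max (-u i t) 0) n
    simp only [hout (-1) (Or.inl (by norm_num)), hout (n + 1) (Or.inr (by omega)), neg_zero,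
      max_self] at hprev hnext
    rw [sum_add_distrib, ← mul_sum, ← mul_sum, hprev, hnext]
    have := le_max_right (-u n t) 0
    have := le_max_right (-u 0 t) 0
    nlinarith [hA0 t, hD0 t, hK t ht, hf_nonneg t]
  have hf0 : f 0 ≤ 0 := sum_nonpos fun i _ => max_le (neg_nonpos.2 (hinit i)) le_rfl
  have hfT : f T ≤ 0 := by
    simpa [gronwallBound_ε0_δ0] using le_gronwallBound_of_liminf_deriv_right_le hf_cont hf_slope
      hf0 (fun t _ => (add_zero (K * f t)).ge) T ⟨hT, le_rfl⟩
  have hj := (sum_eq_zero_iff_of_nonneg fun i _ => le_max_right _ _).1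
    (hfT.antisymm (hf_nonneg T)) j.toNat (mem_range.2 (by omega))
  rw [Int.toNat_of_nonneg hj0] at hj
  linarith [le_max_left (-u j T) 0]

lemma nonneg (hu : IsForwardSupersolution lamA lamD n u)
    (hA : Continuous lamA) (hD : Continuous lamD) (hA0 : ∀ t, 0 ≤ lamA t)
    (hD0 : ∀ t, 0 ≤ lamD t) (hout : ∀ j : ℤ, (j < 0 ∨ (n : ℤ) < j) → ∀ t, u j t = 0)
    (hinit : ∀ j, 0 ≤ u j 0) (j : ℤ) {t : ℝ} (ht : 0 ≤ t) : 0 ≤ u j t := by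
  obtain ⟨K, hK⟩ := (isCompact_Icc (a := 0) (b := t)).bddAbove_image (hA.add hD).continuousOn
  exact hu.nonneg_of_rate_le hA0 hD0 hout hinit ht
    (fun s hs => hK (mem_image_of_mem _ (Ico_subset_Icc_self hs))) j

end IsForwardSupersolution

namespace DecoupledSol

variable {lamA lamD : ℝ → ℝ} {v c : ℕ} {q : ℤ → ℝ → ℝ} {qF : ℝ → ℝ}

lemma isForwardSupersolution (h : DecoupledSol lamA lamD v c q qF) :
    IsForwardSupersolution lamA lamD c q :=
  fun j hj0 hjc t ht => ⟨_, h.ode j hj0 hjc t ht, le_rfl⟩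

lemma isForwardSubsolution (h : DecoupledSol lamA lamD v c q qF) (hA0 : ∀ t, 0 ≤ lamA t)
    (hq : ∀ j t, 0 ≤ t → 0 ≤ q j t) (n : ℕ) : IsForwardSubsolution lamA lamD n q := by
  intro j hj0 _ t ht
  rcases le_or_gt j c with hjc | hjc
  · exact ⟨_, h.ode j hj0 hjc t ht, le_rfl⟩
  have hzero : q j = 0 := funext (h.out j (Or.inr hjc))
  refine ⟨0, hzero ▸ hasDerivAt_const t 0, ?_⟩
  simp only [forwardOp, hzero, h.out (j + 1) (Or.inr (by omega)), Pi.zero_apply]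
  linarith [mul_nonneg (hA0 t) (hq (j - 1) t ht)]

lemma init_nonneg (h : DecoupledSol lamA lamD v c q qF) (j : ℤ) : 0 ≤ q j 0 := by
  by_cases hj : 0 ≤ j ∧ j ≤ c
  · rw [h.init j hj.1 hj.2]
    split_ifs <;> norm_num
  · rw [h.out j (by omega)]

lemma nonneg (h : DecoupledSol lamA lamD v c q qF) (hA : Continuous lamA) (hD : Continuous lamD)
    (hA0 : ∀ t, 0 ≤ lamA t) (hD0 : ∀ t, 0 ≤ lamD t) (j : ℤ) {t : ℝ} (ht : 0 ≤ t) :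
    0 ≤ q j t :=
  h.isForwardSupersolution.nonneg hA hD hA0 hD0 h.out h.init_nonneg j ht

lemma le_of_capacity_le {c' : ℕ} {q' : ℤ → ℝ → ℝ} {qF' : ℝ → ℝ}
    (h : DecoupledSol lamA lamD v c q qF) (h' : DecoupledSol lamA lamD v c' q' qF')
    (hcc' : c ≤ c') (hA : Continuous lamA) (hD : Continuous lamD)
    (hA0 : ∀ t, 0 ≤ lamA t) (hD0 : ∀ t, 0 ≤ lamD t) (j : ℤ) {t : ℝ} (ht : 0 ≤ t) :
    q j t ≤ q' j t := by
  have hsuper : IsForwardSupersolution lamA lamD c' (q' - q) :=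
    h'.isForwardSupersolution.sub
      (h.isForwardSubsolution hA0 (fun i _ hs => h.nonneg hA hD hA0 hD0 i hs) c')
  have hout : ∀ i : ℤ, (i < 0 ∨ (c' : ℤ) < i) → ∀ s, (q' - q) i s = 0 := by
    intro i hi s
    rw [Pi.sub_apply, Pi.sub_apply, h'.out i hi s, h.out i (by omega) s, sub_self]
  have hinit : ∀ i, 0 ≤ (q' - q) i 0 := fun i => by
    rw [Pi.sub_apply, Pi.sub_apply, sub_nonneg]
    by_cases hi : 0 ≤ i ∧ i ≤ c
    · rw [h.init i hi.1 hi.2, h'.init i hi.1 (by omega)]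
    · rw [h.out i (by omega)]
      exact h'.init_nonneg i
  simpa [sub_nonneg] using hsuper.nonneg hA hD hA0 hD0 hout hinit j ht

lemma failure_add_sum_eq_one (h : DecoupledSol lamA lamD v c q qF) (hvc : v ≤ c) {T : ℝ}
    (hT : 0 ≤ T) : qF T + ∑ i ∈ range (c + 1), q i T = 1 := by
  set mass : ℝ → ℝ := fun t => qF t + ∑ i ∈ range (c + 1), q i t
  have hmem : ∀ i ∈ range (c + 1), 0 ≤ (i : ℤ) ∧ (i : ℤ) ≤ c := fun i hi =>
    ⟨Int.natCast_nonneg i, by have := mem_range.1 hi; omega⟩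
  have hderiv : ∀ t, 0 ≤ t → HasDerivAt mass 0 t := fun t ht => by
    have hsum := HasDerivAt.fun_sum fun (i : ℕ) hi => h.ode i (hmem i hi).1 (hmem i hi).2 t ht
    rw [← neg_add_cancel (lamA t * q c t + lamD t * q 0 t),
      ← sum_range_forwardOp lamA lamD (h.out (-1) (Or.inl (by norm_num)) t)
        (h.out (c + 1) (Or.inr (by omega)) t)]
    exact (h.odeF t ht).add hsum |>.congr_deriv (add_comm _ _)
  have hconst := constant_of_has_deriv_right_zero
    (fun t ht => (hderiv t ht.1).continuousAt.continuousWithinAt)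
    (fun t ht => (hderiv t ht.1).hasDerivWithinAt) T ⟨hT, le_rfl⟩
  have hmass0 : mass 0 = 1 := by
    simp only [mass, h.initF, zero_add]
    rw [sum_congr rfl fun (i : ℕ) hi => h.init i (hmem i hi).1 (hmem i hi).2]
    simp [mem_range.2 (Nat.lt_succ_of_le hvc)]
  exact hconst.trans hmass0

end DecoupledSol

/-- **Monotonicity of the failure probability in the station capacity.**
For the decoupled single-station model with fixed initial vehicle count `v`
and fixed (continuous, nonnegative) rates, the failure probability
`q^F(T; v, c)` is nonincreasing in the capacity `c`: if `v ≤ c ≤ c'` then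
`q^F(T; v, c') ≤ q^F(T; v, c)` for every `T ≥ 0`. -/
theorem failure_prob_antitone_in_capacity
    (lamA lamD : ℝ → ℝ) (hA : Continuous lamA) (hD : Continuous lamD)
    (hA0 : ∀ t, 0 ≤ lamA t) (hD0 : ∀ t, 0 ≤ lamD t)
    (v c c' : ℕ) (hvc : v ≤ c) (hcc' : c ≤ c')
    (q : ℤ → ℝ → ℝ) (qF : ℝ → ℝ) (hsol : DecoupledSol lamA lamD v c q qF)
    (q' : ℤ → ℝ → ℝ) (qF' : ℝ → ℝ) (hsol' : DecoupledSol lamA lamD v c' q' qF')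
    (T : ℝ) (hT : 0 ≤ T) :
    qF' T ≤ qF T := by
  have hmass := hsol.failure_add_sum_eq_one hvc hT
  have hmass' := hsol'.failure_add_sum_eq_one (hvc.trans hcc') hT
  have hle : ∀ j : ℤ, q j T ≤ q' j T := fun j =>
    hsol.le_of_capacity_le hsol' hcc' hA hD hA0 hD0 j hT
  have hsurvival : ∑ i ∈ range (c + 1), q i T ≤ ∑ i ∈ range (c' + 1), q' i T :=
    calc ∑ i ∈ range (c + 1), q i T ≤ ∑ i ∈ range (c + 1), q' i T :=
          sum_le_sum fun i _ => hle i
      _ ≤ ∑ i ∈ range (c' + 1), q' i T :=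
          sum_le_sum_of_subset_of_nonneg (range_subset_range.2 (by omega))
            fun i _ _ => hsol'.nonneg hA hD hA0 hD0 i hT
  linarith
end

section
/- Stochastic dominance under decoupling (two-station toy case): consider two stations with a single Poisson stream at rate λ moving vehicles from station 1 to station 2. In the coupled chain, a jump at station 2 occurs only if station 1 is nonempty; in the decoupled chain for station 2, jumps occur at every event. Then for every t and every j, the probability that the decoupled station 2 has exactly j vehicles and has not failed upper-bounds the probability that the coupled station 2 has exactly j vehicles and the system has not failed: P(V_2(t) = j) ≤ P(V̄_2(t) = j). -/
/-!
Write `S b t = ∑ₐ p a b t` for the coupled marginal of station 2. Summing the forward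
equations over station 1 telescopes to `Ṡ b = λ (S (b-1) - p 0 (b-1)) - λ S b`: the
pure-birth equations of the decoupled chain, except that the mass `p 0 (b-1)` (station 1
empty) is lost to failure instead of moving up. The solution `p` is nonnegative (integrating
factor `e^{λt}`, downward induction on the station-1 count), so the gap `d b = q b - S b`
satisfies `ḋ b = λ (d (b-1) + p 0 (b-1)) - λ d b` with a nonnegative source and `d b 0 = 0`;
induction on `b` gives `d b ≥ 0`.
-/

open Finset

theorem nonneg_of_hasDerivAt_sub_mul_self {f g : ℝ → ℝ} {lam : ℝ}
    (hf : ∀ t, 0 ≤ t → HasDerivAt f (g t - lam * f t) t) (hg : ∀ t, 0 ≤ t → 0 ≤ g t)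
    (h0 : 0 ≤ f 0) {t : ℝ} (ht : 0 ≤ t) : 0 ≤ f t := by
  have hF : ∀ s, 0 ≤ s → HasDerivAt (fun s => Real.exp (lam * s) * f s)
      (Real.exp (lam * s) * g s) s := fun s hs =>
    (((hasDerivAt_id s).const_mul lam).exp.mul (hf s hs)).congr_deriv (by simp only [id]; ring)
  have hmono : MonotoneOn (fun s => Real.exp (lam * s) * f s) (Set.Ici 0) := by
    refine monotoneOn_of_hasDerivWithinAt_nonneg (convex_Ici 0)
      (fun s hs => (hF s hs).continuousAt.continuousWithinAt)
      (fun s hs => (hF s (interior_subset hs)).hasDerivWithinAt)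
      (fun s hs => mul_nonneg (Real.exp_pos _).le (hg s (interior_subset hs)))
  have := hmono Set.self_mem_Ici ht ht
  simp only [mul_zero, Real.exp_zero, one_mul] at this
  exact (mul_nonneg_iff_of_pos_left (Real.exp_pos _)).1 (h0.trans this)

theorem Int.sum_Icc_comp_add_one {M : Type*} [AddCommGroup M] (f : ℤ → M) {m n : ℤ}
    (hmn : m ≤ n + 1) :
    ∑ a ∈ Icc m n, f (a + 1) = ∑ a ∈ Icc m n, f a - f m + f (n + 1) := by
  have hshift : ∑ a ∈ Icc m n, f (a + 1) = ∑ a ∈ Ioc m (n + 1), f a := by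
    rw [← Icc_add_one_left_eq_Ioc, ← map_add_right_Icc, sum_map]
    rfl
  have hbot := sum_Ioc_add_eq_sum_Icc (f := f) hmn
  have htop := sum_Ico_add_eq_sum_Icc (f := f) hmn
  rw [Ico_add_one_right_eq_Icc] at htop
  rw [hshift, ← sub_eq_of_eq_add' htop.symm, ← hbot]
  abel

theorem le_of_hasDerivAt_birth_chain {lam : ℝ} (hlam : 0 ≤ lam) {S q r : ℤ → ℝ → ℝ}
    {N : ℤ} (hr : ∀ b t, 0 ≤ t → 0 ≤ r b t)
    (hS : ∀ b, 0 ≤ b → b ≤ N → ∀ t, 0 ≤ t →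
      HasDerivAt (S b) (lam * (S (b - 1) t - r b t) - lam * S b t) t)
    (hq : ∀ b, 0 ≤ b → b ≤ N → ∀ t, 0 ≤ t →
      HasDerivAt (q b) (lam * q (b - 1) t - lam * q b t) t)
    (hinit : ∀ b, 0 ≤ b → b ≤ N → S b 0 ≤ q b 0)
    (hbase : ∀ t, 0 ≤ t → S (-1) t ≤ q (-1) t) :
    ∀ b, 0 ≤ b → b ≤ N → ∀ t, 0 ≤ t → S b t ≤ q b t := by
  suffices h : ∀ b, -1 ≤ b → b ≤ N → ∀ t, 0 ≤ t → S b t ≤ q b t from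
    fun b hb => h b (by omega)
  intro b hb
  induction b, hb using Int.leInduction with
  | base => exact fun _ => hbase
  | succ b hb ih =>
    intro hbN t ht
    have hgap : ∀ s, 0 ≤ s → HasDerivAt (fun s => q (b + 1) s - S (b + 1) s)
        (lam * (q b s - S b s + r (b + 1) s) - lam * (q (b + 1) s - S (b + 1) s)) s := by
      intro s hs
      have h := (hq (b + 1) (by omega) hbN s hs).sub (hS (b + 1) (by omega) hbN s hs)
      rw [add_sub_cancel_right] at h
      exact h.congr_deriv (by ring)
    refine sub_nonneg.1 (nonneg_of_hasDerivAt_sub_mul_self hgap (fun s hs => ?_)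
      (sub_nonneg.2 (hinit _ (by omega) hbN)) ht)
    exact mul_nonneg hlam (add_nonneg (sub_nonneg.2 (ih (by omega) s hs)) (hr _ s hs))

section CoupledChain

variable {lam : ℝ} {v1 c2 : ℕ} {p : ℤ → ℤ → ℝ → ℝ}

theorem nonneg_of_coupled_forward_equations (hlam : 0 ≤ lam)
    (hpout : ∀ a b : ℤ, (a < 0 ∨ (v1 : ℤ) < a ∨ b < 0 ∨ (c2 : ℤ) < b) →
      ∀ t : ℝ, p a b t = 0)
    (hp0 : ∀ a b : ℤ, 0 ≤ a → a ≤ (v1 : ℤ) → 0 ≤ b → b ≤ (c2 : ℤ) →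
      0 ≤ p a b 0)
    (hpode : ∀ a b : ℤ, 0 ≤ a → a ≤ (v1 : ℤ) → 0 ≤ b → b ≤ (c2 : ℤ) →
      ∀ t : ℝ, 0 ≤ t →
        HasDerivAt (p a b) (lam * p (a + 1) (b - 1) t - lam * p a b t) t)
    (a b : ℤ) {t : ℝ} (ht : 0 ≤ t) : 0 ≤ p a b t := by
  suffices h : ∀ a ≤ (v1 : ℤ) + 1, ∀ b t, 0 ≤ t → 0 ≤ p a b t by
    rcases le_or_gt a (v1 + 1) with ha | ha
    · exact h a ha b t ht
    · exact (hpout a b (by omega) t).ge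
  intro a ha
  induction a, ha using Int.leInductionDown with
  | base => exact fun b t _ => (hpout _ b (by omega) t).ge
  | pred a ha ih =>
    intro b t ht
    by_cases hbox : 0 ≤ a - 1 ∧ a - 1 ≤ v1 ∧ 0 ≤ b ∧ b ≤ c2
    · obtain ⟨ha0, ha1, hb0, hb1⟩ := hbox
      have hode := hpode (a - 1) b ha0 ha1 hb0 hb1
      rw [sub_add_cancel] at hode
      exact nonneg_of_hasDerivAt_sub_mul_self hode
        (fun s hs => mul_nonneg hlam (ih _ s hs)) (hp0 _ _ ha0 ha1 hb0 hb1) ht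
    · exact (hpout _ _ (by omega) t).ge

variable (v1 p) in
noncomputable def coupledMarginal (b : ℤ) (t : ℝ) : ℝ := ∑ a ∈ Icc (0 : ℤ) v1, p a b t

theorem coupledMarginal_zero (v2 : ℕ)
    (hpinit : ∀ a b : ℤ, 0 ≤ a → a ≤ (v1 : ℤ) → 0 ≤ b → b ≤ (c2 : ℤ) →
      p a b 0 = if a = (v1 : ℤ) ∧ b = (v2 : ℤ) then 1 else 0)
    {b : ℤ} (hb0 : 0 ≤ b) (hb : b ≤ c2) :
    coupledMarginal v1 p b 0 = if b = (v2 : ℤ) then 1 else 0 := by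
  rw [coupledMarginal,
    sum_congr rfl fun a ha => hpinit a b (mem_Icc.1 ha).1 (mem_Icc.1 ha).2 hb0 hb]
  by_cases hb2 : b = v2 <;> simp [hb2]

theorem hasDerivAt_coupledMarginal
    (hpout : ∀ a b : ℤ, (a < 0 ∨ (v1 : ℤ) < a ∨ b < 0 ∨ (c2 : ℤ) < b) →
      ∀ t : ℝ, p a b t = 0)
    (hpode : ∀ a b : ℤ, 0 ≤ a → a ≤ (v1 : ℤ) → 0 ≤ b → b ≤ (c2 : ℤ) →
      ∀ t : ℝ, 0 ≤ t →
        HasDerivAt (p a b) (lam * p (a + 1) (b - 1) t - lam * p a b t) t)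
    {b : ℤ} (hb0 : 0 ≤ b) (hb : b ≤ c2) {t : ℝ} (ht : 0 ≤ t) :
    HasDerivAt (coupledMarginal v1 p b)
      (lam * (coupledMarginal v1 p (b - 1) t - p 0 (b - 1) t) -
        lam * coupledMarginal v1 p b t) t := by
  have h := HasDerivAt.fun_sum fun a ha =>
    hpode a b (mem_Icc.1 ha).1 (mem_Icc.1 ha).2 hb0 hb t ht
  refine h.congr_deriv ?_
  rw [sum_sub_distrib, ← mul_sum, ← mul_sum,
    Int.sum_Icc_comp_add_one (fun a => p a (b - 1) t) (by omega),
    hpout (v1 + 1) (b - 1) (by omega) t, add_zero]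
  rfl

end CoupledChain

theorem decoupled_dominates_coupled_two_stations_general
    (lam : ℝ) (hlam : 0 ≤ lam)
    (v1 v2 c2 : ℕ)
    (p : ℤ → ℤ → ℝ → ℝ) (q : ℤ → ℝ → ℝ)
    (hpout : ∀ a b : ℤ, (a < 0 ∨ (v1 : ℤ) < a ∨ b < 0 ∨ (c2 : ℤ) < b) →
      ∀ t : ℝ, p a b t = 0)
    (hpinit : ∀ a b : ℤ, 0 ≤ a → a ≤ (v1 : ℤ) → 0 ≤ b → b ≤ (c2 : ℤ) →
      p a b 0 = if a = (v1 : ℤ) ∧ b = (v2 : ℤ) then 1 else 0)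
    (hpode : ∀ a b : ℤ, 0 ≤ a → a ≤ (v1 : ℤ) → 0 ≤ b → b ≤ (c2 : ℤ) →
      ∀ t : ℝ, 0 ≤ t →
        HasDerivAt (p a b) (lam * p (a + 1) (b - 1) t - lam * p a b t) t)
    (hqout : ∀ j : ℤ, (j < 0 ∨ (c2 : ℤ) < j) → ∀ t : ℝ, q j t = 0)
    (hqinit : ∀ j : ℤ, 0 ≤ j → j ≤ (c2 : ℤ) → q j 0 = if j = (v2 : ℤ) then 1 else 0)
    (hqode : ∀ j : ℤ, 0 ≤ j → j ≤ (c2 : ℤ) → ∀ t : ℝ, 0 ≤ t →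
      HasDerivAt (q j) (lam * q (j - 1) t - lam * q j t) t) :
    ∀ t : ℝ, 0 ≤ t → ∀ j : ℤ, 0 ≤ j → j ≤ (c2 : ℤ) →
      (∑ a ∈ Finset.Icc (0 : ℤ) (v1 : ℤ), p a j t) ≤ q j t := by
  intro t ht j hj0 hj
  have hp0 : ∀ a b : ℤ, 0 ≤ a → a ≤ (v1 : ℤ) → 0 ≤ b → b ≤ (c2 : ℤ) → 0 ≤ p a b 0 :=
    fun a b ha0 ha hb0 hb => by rw [hpinit a b ha0 ha hb0 hb]; split_ifs <;> norm_num
  have hmarginal_init : ∀ b : ℤ, 0 ≤ b → b ≤ c2 → coupledMarginal v1 p b 0 ≤ q b 0 :=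
    fun b hb0 hb => by rw [coupledMarginal_zero v2 hpinit hb0 hb, hqinit b hb0 hb]
  have hbase : ∀ s : ℝ, 0 ≤ s → coupledMarginal v1 p (-1) s ≤ q (-1) s := fun s _ => by
    simp [coupledMarginal, hpout _ (-1) (by omega), hqout (-1) (by omega)]
  exact le_of_hasDerivAt_birth_chain hlam (r := fun b => p 0 (b - 1))
    (fun b _ hs => nonneg_of_coupled_forward_equations hlam hpout hp0 hpode 0 (b - 1) hs)
    (fun b hb0 hb _ hs => hasDerivAt_coupledMarginal hpout hpode hb0 hb hs) hqode
    hmarginal_init hbase j hj0 hj t ht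

/-- **Stochastic dominance under decoupling (two-station toy case).**
Two stations; a single Poisson stream at rate `lam` moves vehicles from
station 1 (initially `v1` vehicles, no arrivals) to station 2 (initially
`v2` vehicles, capacity `c2`).  Coupled chain: at each event, if station 1 is
empty or station 2 is full the system enters the absorbing failure state `F`;
otherwise station 1 loses and station 2 gains one vehicle.  Its forward
equations for `p a b t = P(V₁(t)=a, V₂(t)=b, no failure)` are
`ṗ a b = lam·p (a+1) (b-1) - lam·p a b` (probabilities vanishing outside
`{0,…,v1}×{0,…,c2}`).  Decoupled chain for station 2: station 2 gains a
vehicle at every event, failing from state `c2`; its forward equations are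
`q̇ j = lam·q (j-1) - lam·q j` on `{0,…,c2}`.  Then for every `t ≥ 0` and
every `j`, `P(V₂(t)=j) = ∑_a p a j t ≤ q j t = P(V̄₂(t)=j)`. -/
theorem decoupled_dominates_coupled_two_stations
    (lam : ℝ) (hlam : 0 ≤ lam)
    (v1 v2 c2 : ℕ) (hv2 : v2 ≤ c2)
    (p : ℤ → ℤ → ℝ → ℝ) (q : ℤ → ℝ → ℝ)
    (hpout : ∀ a b : ℤ, (a < 0 ∨ (v1 : ℤ) < a ∨ b < 0 ∨ (c2 : ℤ) < b) →
      ∀ t : ℝ, p a b t = 0)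
    (hpinit : ∀ a b : ℤ, 0 ≤ a → a ≤ (v1 : ℤ) → 0 ≤ b → b ≤ (c2 : ℤ) →
      p a b 0 = if a = (v1 : ℤ) ∧ b = (v2 : ℤ) then 1 else 0)
    (hpode : ∀ a b : ℤ, 0 ≤ a → a ≤ (v1 : ℤ) → 0 ≤ b → b ≤ (c2 : ℤ) →
      ∀ t : ℝ, 0 ≤ t →
        HasDerivAt (p a b) (lam * p (a + 1) (b - 1) t - lam * p a b t) t)
    (hqout : ∀ j : ℤ, (j < 0 ∨ (c2 : ℤ) < j) → ∀ t : ℝ, q j t = 0)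
    (hqinit : ∀ j : ℤ, 0 ≤ j → j ≤ (c2 : ℤ) → q j 0 = if j = (v2 : ℤ) then 1 else 0)
    (hqode : ∀ j : ℤ, 0 ≤ j → j ≤ (c2 : ℤ) → ∀ t : ℝ, 0 ≤ t →
      HasDerivAt (q j) (lam * q (j - 1) t - lam * q j t) t) :
    ∀ t : ℝ, 0 ≤ t → ∀ j : ℤ, 0 ≤ j → j ≤ (c2 : ℤ) →
      (∑ a ∈ Finset.Icc (0 : ℤ) (v1 : ℤ), p a j t) ≤ q j t :=
  decoupled_dominates_coupled_two_stations_general lam hlam v1 v2 c2 p q hpout hpinit hpode hqout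
    hqinit hqode
end

section
/- Comparison lemma for linear ODE systems with sub-stochastic coupling: let p(t) ∈ ℝ^{c+1} solve ṗ = Q(t)p − r(t) and q(t) ∈ ℝ^{c+1} solve q̇ = Q(t)q, with the same initial condition p(0) = q(0) ≥ 0, where Q(t) is a generator-type matrix (nonnegative off-diagonal entries) and r(t) ≥ 0 componentwise. Then p(t) ≤ q(t) componentwise for all t ≥ 0. -/
/-!
The difference `u = q - p` solves `u̇ = Q(t) u + r(t)` with `u 0 = 0`. Its negative-part energy
`φ = ∑ i, (uᵢ⁻)²` has `φ̇ = -2 ∑ i, uᵢ⁻ ((Q u)ᵢ + rᵢ)`. The loss term only helps, and a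
nonnegative off-diagonal entry `Q i j` can only push a negative component `uᵢ` up, so on `[0, T]`
we get `φ̇ ≤ 2 M n φ` with `M` a bound for the entries of `Q`. Grönwall and `φ 0 = 0` force
`φ = 0`, i.e. `u ≥ 0`.
-/

open Set Topology Matrix

theorem hasDerivAt_negPart_sq (x : ℝ) : HasDerivAt (fun y : ℝ => y⁻ ^ 2) (-2 * x⁻) x := by
  refine hasDerivAt_of_hasDerivAt_of_ne' (f := fun y : ℝ => y⁻ ^ 2) (x := 0) (fun y hy => ?_)
    (continuous_negPart.pow 2).continuousAt (continuous_negPart.const_mul _).continuousAt x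
  rcases hy.lt_or_gt with hy | hy
  · have h : (fun z : ℝ => z⁻ ^ 2) =ᶠ[𝓝 y] fun z => z ^ 2 := by
      filter_upwards [Iio_mem_nhds hy] with z hz
      rw [negPart_eq_neg.2 hz.le, neg_sq]
    simpa [negPart_eq_neg.2 hy.le] using (hasDerivAt_pow 2 y).congr_of_eventuallyEq h
  · have h : (fun z : ℝ => z⁻ ^ 2) =ᶠ[𝓝 y] fun _ => 0 := by
      filter_upwards [Ioi_mem_nhds hy] with z hz
      rw [negPart_eq_zero.2 hz.le, zero_pow two_ne_zero]
    simpa [negPart_eq_zero.2 hy.le] using (hasDerivAt_const y (0 : ℝ)).congr_of_eventuallyEq h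

-- `0 ≤ c` covers an off-diagonal entry of a Metzler matrix, `x = y` a diagonal one.
theorem neg_negPart_mul_mul_le {x y c M : ℝ} (hc : 0 ≤ c ∨ x = y) (hcM : c ≤ M) :
    -(x⁻ * (c * y)) ≤ M * (x⁻ * y⁻) := by
  have hpos : 0 ≤ x⁻ * (c * y⁺) := by
    rcases hc with hc | rfl
    · positivity
    · rcases le_total 0 x with hx | hx
      · simp [negPart_eq_zero.2 hx]
      · simp [posPart_eq_zero.2 hx]
  have hneg : c * (x⁻ * y⁻) ≤ M * (x⁻ * y⁻) := by gcongr
  have hsplit : -(x⁻ * (c * y)) = c * (x⁻ * y⁻) - x⁻ * (c * y⁺) := by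
    conv_lhs => rw [← posPart_sub_negPart y]
    ring
  linarith

theorem Matrix.neg_sum_negPart_mul_mulVec_le {ι : Type*} [Fintype ι] {A : Matrix ι ι ℝ} {M : ℝ}
    (hA : ∀ i j, i ≠ j → 0 ≤ A i j) (hAM : ∀ i j, A i j ≤ M) (hM : 0 ≤ M) (u : ι → ℝ) :
    -∑ i, (u i)⁻ * (A *ᵥ u) i ≤ M * Fintype.card ι * ∑ i, (u i)⁻ ^ 2 :=
  calc -∑ i, (u i)⁻ * (A *ᵥ u) i = ∑ i, ∑ j, -((u i)⁻ * (A i j * u j)) := by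
        simp only [mulVec, dotProduct, Finset.mul_sum, Finset.sum_neg_distrib]
    _ ≤ ∑ i, ∑ j, M * ((u i)⁻ * (u j)⁻) := by
        gcongr with i _ j _
        exact neg_negPart_mul_mul_le ((eq_or_ne i j).elim (fun h => .inr (by rw [h]))
          fun h => .inl (hA i j h)) (hAM i j)
    _ = M * (∑ i, (u i)⁻) ^ 2 := by
        rw [sq, Finset.sum_mul_sum, Finset.mul_sum]; simp only [Finset.mul_sum]
    _ ≤ M * (Fintype.card ι * ∑ i, (u i)⁻ ^ 2) := by
        gcongr; exact sq_sum_le_card_mul_sum_sq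
    _ = _ := by ring

theorem nonpos_of_hasDerivWithinAt_le_mul_self {f f' : ℝ → ℝ} {K a b : ℝ}
    (hf : ContinuousOn f (Icc a b)) (hf' : ∀ x ∈ Ico a b, HasDerivWithinAt f (f' x) (Ici x) x)
    (ha : f a ≤ 0) (bound : ∀ x ∈ Ico a b, f' x ≤ K * f x) : ∀ x ∈ Icc a b, f x ≤ 0 := by
  intro x hx
  simpa [gronwallBound_ε0_δ0] using le_gronwallBound_of_liminf_deriv_right_le (ε := 0) hf
    (fun x hx _ hr => (hf' x hx).liminf_right_slope_le hr) ha (by simpa using bound) x hx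

theorem IsCompact.exists_forall_matrix_entry_le {X ι : Type*} [TopologicalSpace X] [Fintype ι]
    {A : X → Matrix ι ι ℝ} (hA : ∀ i j, Continuous fun x => A x i j) {K : Set X}
    (hK : IsCompact K) : ∃ M, 0 ≤ M ∧ ∀ x ∈ K, ∀ i j, A x i j ≤ M := by
  obtain ⟨C, hC⟩ := hK.exists_bound_of_continuousOn (f := fun x i j => A x i j)
    (continuous_pi fun i => continuous_pi fun j => hA i j).continuousOn
  refine ⟨max C 0, le_max_right _ _, fun x hx i j => ?_⟩
  calc A x i j ≤ ‖A x i j‖ := Real.le_norm_self _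
    _ ≤ ‖fun i j => A x i j‖ := (norm_le_pi_norm _ j).trans (norm_le_pi_norm (fun i j => A x i j) i)
    _ ≤ max C 0 := (hC x hx).trans (le_max_left _ _)

theorem nonneg_of_hasDerivAt_mulVec_add {ι : Type*} [Fintype ι] {A : ℝ → Matrix ι ι ℝ}
    {r u : ℝ → ι → ℝ} {a b M : ℝ} (hA : ∀ t ∈ Ico a b, ∀ i j, i ≠ j → 0 ≤ A t i j)
    (hAM : ∀ t ∈ Ico a b, ∀ i j, A t i j ≤ M) (hM : 0 ≤ M) (hr : ∀ t ∈ Ico a b, ∀ i, 0 ≤ r t i)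
    (hu : ∀ t ∈ Icc a b, ∀ i, HasDerivAt (fun s => u s i) ((A t *ᵥ u t) i + r t i) t)
    (ha : ∀ i, 0 ≤ u a i) : ∀ t ∈ Icc a b, ∀ i, 0 ≤ u t i := by
  set φ : ℝ → ℝ := fun t => ∑ i, (u t i)⁻ ^ 2
  have hφ : ∀ t ∈ Icc a b,
      HasDerivAt φ (∑ i, -2 * (u t i)⁻ * ((A t *ᵥ u t) i + r t i)) t := fun t ht =>
    HasDerivAt.fun_sum fun i _ => (hasDerivAt_negPart_sq _).comp t (hu t ht i)
  have hφ_bound : ∀ t ∈ Ico a b,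
      ∑ i, -2 * (u t i)⁻ * ((A t *ᵥ u t) i + r t i) ≤ 2 * M * Fintype.card ι * φ t := by
    intro t ht
    have hloss : 0 ≤ ∑ i, (u t i)⁻ * r t i :=
      Finset.sum_nonneg fun i _ => mul_nonneg (negPart_nonneg _) (hr t ht i)
    have hgain := Matrix.neg_sum_negPart_mul_mulVec_le (hA t ht) (hAM t ht) hM (u t)
    calc ∑ i, -2 * (u t i)⁻ * ((A t *ᵥ u t) i + r t i)
        = 2 * -∑ i, (u t i)⁻ * (A t *ᵥ u t) i - 2 * ∑ i, (u t i)⁻ * r t i := by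
          simp only [← Finset.sum_neg_distrib, Finset.mul_sum, ← Finset.sum_sub_distrib]
          exact Finset.sum_congr rfl fun i _ => by ring
      _ ≤ 2 * M * Fintype.card ι * φ t := by linarith
  have hφ_nonpos := nonpos_of_hasDerivWithinAt_le_mul_self
    (fun t ht => (hφ t ht).continuousAt.continuousWithinAt)
    (fun t ht => (hφ t (Ico_subset_Icc_self ht)).hasDerivWithinAt)
    (by simp [φ, negPart_eq_zero.2 (ha _)]) hφ_bound
  intro t ht i
  have hsq : (u t i)⁻ ^ 2 = 0 := le_antisymm
    ((Finset.single_le_sum (fun j _ => sq_nonneg (u t j)⁻) (Finset.mem_univ i)).trans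
      (hφ_nonpos t ht)) (sq_nonneg _)
  exact negPart_eq_zero.1 (pow_eq_zero_iff two_ne_zero |>.1 hsq)

theorem ode_comparison_substochastic_general
    (n : ℕ)
    (Q : ℝ → Matrix (Fin n) (Fin n) ℝ)
    (hQcont : ∀ i j, Continuous fun t => Q t i j)
    (hQmetzler : ∀ t : ℝ, 0 ≤ t → ∀ i j : Fin n, i ≠ j → 0 ≤ Q t i j)
    (r : ℝ → Fin n → ℝ)
    (hrnonneg : ∀ t : ℝ, 0 ≤ t → ∀ i, 0 ≤ r t i)
    (p q : ℝ → Fin n → ℝ)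
    (hp : ∀ (i : Fin n) (t : ℝ), 0 ≤ t →
      HasDerivAt (fun s => p s i) ((Q t).mulVec (p t) i - r t i) t)
    (hq : ∀ (i : Fin n) (t : ℝ), 0 ≤ t →
      HasDerivAt (fun s => q s i) ((Q t).mulVec (q t) i) t)
    (hinit : p 0 = q 0) :
    ∀ t : ℝ, 0 ≤ t → ∀ i, p t i ≤ q t i := by
  intro T hT i
  obtain ⟨M, hM, hQM⟩ := (isCompact_Icc (a := 0) (b := T)).exists_forall_matrix_entry_le hQcont
  have hdiff : ∀ t ∈ Icc 0 T, ∀ j, HasDerivAt (fun s => (q - p) s j)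
      ((Q t *ᵥ (q - p) t) j + r t j) t := fun t ht j =>
    ((hq j t ht.1).sub (hp j t ht.1)).congr_deriv (by simp only [Pi.sub_apply, mulVec_sub]; ring)
  exact sub_nonneg.1 <| nonneg_of_hasDerivAt_mulVec_add (fun t ht => hQmetzler t ht.1)
    (fun t ht => hQM t (Ico_subset_Icc_self ht)) hM (fun t ht => hrnonneg t ht.1) hdiff
    (by simp [hinit]) T ⟨hT, le_rfl⟩ i

/-- **Comparison lemma for linear ODE systems with sub-stochastic coupling.**
Let `Q t` be a continuous family of Metzler (generator-type) matrices
(nonnegative off-diagonal entries) and `r t ≥ 0` a continuous loss term.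
If `p` solves `ṗ = Q(t)p - r(t)` and `q` solves `q̇ = Q(t)q` with the same
nonnegative initial condition `p 0 = q 0 ≥ 0`, then `p t ≤ q t`
componentwise for all `t ≥ 0`. -/
theorem ode_comparison_substochastic
    (n : ℕ)
    (Q : ℝ → Matrix (Fin n) (Fin n) ℝ)
    (hQcont : ∀ i j, Continuous fun t => Q t i j)
    (hQmetzler : ∀ t : ℝ, 0 ≤ t → ∀ i j : Fin n, i ≠ j → 0 ≤ Q t i j)
    (r : ℝ → Fin n → ℝ)
    (hrcont : ∀ i, Continuous fun t => r t i)
    (hrnonneg : ∀ t : ℝ, 0 ≤ t → ∀ i, 0 ≤ r t i)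
    (p q : ℝ → Fin n → ℝ)
    (hp : ∀ (i : Fin n) (t : ℝ), 0 ≤ t →
      HasDerivAt (fun s => p s i) ((Q t).mulVec (p t) i - r t i) t)
    (hq : ∀ (i : Fin n) (t : ℝ), 0 ≤ t →
      HasDerivAt (fun s => q s i) ((Q t).mulVec (q t) i) t)
    (hinit : p 0 = q 0) (hinit_nonneg : ∀ i, 0 ≤ p 0 i) :
    ∀ t : ℝ, 0 ≤ t → ∀ i, p t i ≤ q t i :=
  ode_comparison_substochastic_general n Q hQcont hQmetzler r hrnonneg p q hp hq hinit
end
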